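/- arXiv:1412.0305 — 2 statements merged into one kernel-verified Lean document; each statement's English description precedes it below -/
import Mathlib

section
/- Let q be a prime power and let 0 ≤ k < m and 0 ≤ d < q be integers. Suppose s_1, ..., s_m are nonnegative integers with s_j ≤ m(q-1) for all j and kq ≤ s_1 ≤ k(q-1)+d. Then the integer N = Σ_{j=1}^m s_j q^{m-j} satisfies kq^m ≤ N ≤ k(q^m - 1) + (d+m)q^{m-1}, and consequently N mod* (q^m - 1) ≤ (d+m)q^{m-1}, where a mod* b = a if a ≤ b and a mod b otherwise. -/
/-- `a mod* b`: equals `a` if `a ≤ b`, and `a % b` otherwise. -/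
def modStar (a b : ℕ) : ℕ := if a ≤ b then a else a % b

lemma geom_nat (q n : ℕ) (hq : 1 ≤ q) :
    ∑ i ∈ Finset.range n, (q - 1) * q ^ i = q ^ n - 1 := by
  induction n with
  | zero => simp
  | succ n ih =>
    rw [Finset.sum_range_succ, ih]
    have h1 : 1 ≤ q ^ n := Nat.one_le_pow _ _ hq
    have h3 : (q - 1) * q ^ n = q * q ^ n - q ^ n := by
      rw [Nat.sub_mul, one_mul]
    have h4 : q ^ n ≤ q * q ^ n := Nat.le_mul_of_pos_left _ (by omega)
    rw [h3, pow_succ, mul_comm (q ^ n) q]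
    omega

/-- the key arithmetic inequality.  If `s j ≤ m(q-1)` for all `j`
and `kq ≤ s 1 ≤ k(q-1) + d` for the first column sum, then
`N = ∑ j, s j * q^(m-1-j)` satisfies `kq^m ≤ N ≤ k(q^m-1) + (d+m)q^(m-1)`,
and consequently `N mod* (q^m - 1) ≤ (d+m) q^(m-1)`. -/
theorem stmt_3 (q m d k : ℕ) (hq : IsPrimePow q) (hk : k < m) (hd : d < q)
    (s : Fin m → ℕ) (hs : ∀ j, s j ≤ m * (q - 1))
    (hs1l : k * q ≤ s ⟨0, lt_of_le_of_lt (Nat.zero_le k) hk⟩)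
    (hs1u : s ⟨0, lt_of_le_of_lt (Nat.zero_le k) hk⟩ ≤ k * (q - 1) + d) :
    k * q ^ m ≤ (∑ j : Fin m, s j * q ^ (m - 1 - (j : ℕ))) ∧
    (∑ j : Fin m, s j * q ^ (m - 1 - (j : ℕ))) ≤ k * (q ^ m - 1) + (d + m) * q ^ (m - 1) ∧
    modStar (∑ j : Fin m, s j * q ^ (m - 1 - (j : ℕ))) (q ^ m - 1)
      ≤ (d + m) * q ^ (m - 1) := by
  have hq2 : 2 ≤ q := hq.two_le
  obtain ⟨n, rfl⟩ : ∃ n, m = n + 1 := ⟨m - 1, by omega⟩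
  have hA1 : 1 ≤ q ^ n := Nat.one_le_pow _ _ (by omega)
  have h0 : (⟨0, lt_of_le_of_lt (Nat.zero_le k) hk⟩ : Fin (n+1)) = 0 := rfl
  rw [h0] at hs1l hs1u
  have hexp : ∀ x : ℕ, n + 1 - 1 - (x + 1) = n - 1 - x := fun x => by omega
  have hsplit : (∑ j : Fin (n + 1), s j * q ^ (n + 1 - 1 - (j : ℕ)))
      = s 0 * q ^ n + ∑ j : Fin n, s j.succ * q ^ (n - 1 - (j : ℕ)) := by
    rw [Fin.sum_univ_succ]
    simp only [Fin.val_succ, Fin.val_zero, Nat.add_sub_cancel, Nat.sub_zero, hexp]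
    refine congrArg _ (Finset.sum_congr rfl fun j _ => ?_)
    congr 2
    omega
  -- lower bound
  have hlow : k * q ^ (n + 1) ≤ (∑ j : Fin (n + 1), s j * q ^ (n + 1 - 1 - (j : ℕ))) := by
    rw [hsplit]
    calc k * q ^ (n + 1) = (k * q) * q ^ n := by ring
    _ ≤ s 0 * q ^ n := Nat.mul_le_mul_right _ hs1l
    _ ≤ _ := Nat.le_add_right _ _
  -- tail bound
  have htail : (∑ j : Fin n, s j.succ * q ^ (n - 1 - (j : ℕ))) ≤ (n + 1) * (q ^ n - 1) := by
    calc (∑ j : Fin n, s j.succ * q ^ (n - 1 - (j : ℕ)))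
        ≤ ∑ j : Fin n, (n + 1) * ((q - 1) * q ^ (n - 1 - (j : ℕ))) := by
          apply Finset.sum_le_sum
          intro j _
          rw [← mul_assoc]
          exact Nat.mul_le_mul_right _ (hs j.succ)
      _ = (n + 1) * ∑ j ∈ Finset.range n, (q - 1) * q ^ (n - 1 - j) := by
          rw [Fin.sum_univ_eq_sum_range (fun i => (n + 1) * ((q - 1) * q ^ (n - 1 - i))) n,
            Finset.mul_sum]
      _ = (n + 1) * ∑ j ∈ Finset.range n, (q - 1) * q ^ j := by
          rw [Finset.sum_range_reflect (fun j => (q - 1) * q ^ j) n]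
      _ = (n + 1) * (q ^ n - 1) := by rw [geom_nat q n (by omega)]
  -- upper bound
  have key : k * (q - 1) * q ^ n ≤ k * (q ^ (n + 1) - 1) := by
    have h3 : (q - 1) * q ^ n = q ^ (n + 1) - q ^ n := by
      rw [Nat.sub_mul, one_mul, pow_succ, mul_comm (q ^ n) q]
    rw [mul_assoc, h3]
    exact Nat.mul_le_mul_left _ (Nat.sub_le_sub_left hA1 _)
  have hupp : (∑ j : Fin (n + 1), s j * q ^ (n + 1 - 1 - (j : ℕ)))
      ≤ k * (q ^ (n + 1) - 1) + (d + (n + 1)) * q ^ n := by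
    rw [hsplit]
    calc s 0 * q ^ n + ∑ j : Fin n, s j.succ * q ^ (n - 1 - (j : ℕ))
        ≤ (k * (q - 1) + d) * q ^ n + (n + 1) * (q ^ n - 1) :=
          Nat.add_le_add (Nat.mul_le_mul_right _ hs1u) htail
      _ ≤ (k * (q - 1) + d) * q ^ n + (n + 1) * q ^ n :=
          Nat.add_le_add_left (Nat.mul_le_mul_left _ (Nat.sub_le _ _)) _
      _ = k * (q - 1) * q ^ n + (d + (n + 1)) * q ^ n := by ring
      _ ≤ k * (q ^ (n + 1) - 1) + (d + (n + 1)) * q ^ n := Nat.add_le_add_right key _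
  refine ⟨hlow, hupp, ?_⟩
  have hqn1 : 1 ≤ q ^ (n + 1) := Nat.one_le_pow _ _ (by omega)
  generalize hg : (∑ j : Fin (n + 1), s j * q ^ (n + 1 - 1 - (j : ℕ))) = N at hlow hupp ⊢
  unfold modStar
  split_ifs with h
  · rcases Nat.eq_zero_or_pos k with rfl | hkpos
    · simpa using hupp
    · exfalso
      have h1 : q ^ (n + 1) ≤ N := le_trans (Nat.le_mul_of_pos_left _ hkpos) hlow
      omega
  · have hb : k * (q ^ (n + 1) - 1) ≤ N := by
      calc k * (q ^ (n + 1) - 1) ≤ k * q ^ (n + 1) :=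
            Nat.mul_le_mul_left _ (Nat.sub_le _ _)
      _ ≤ N := hlow
    have hmod : N % (q ^ (n + 1) - 1) = (N - (q ^ (n + 1) - 1) * k) % (q ^ (n + 1) - 1) :=
      (Nat.sub_mul_mod (by rw [mul_comm]; exact hb)).symm
    rw [hmod]
    calc (N - (q ^ (n + 1) - 1) * k) % (q ^ (n + 1) - 1)
        ≤ N - (q ^ (n + 1) - 1) * k := Nat.mod_le _ _
      _ ≤ (d + (n + 1)) * q ^ n := by rw [mul_comm]; omega
end

section
/- If a nonzero polynomial h ∈ F_q[X,Y] has total degree d < q and ℓ = {(a_1 + b_1 t, a_2 + b_2 t) : t ∈ F_q} is a line (with (b_1,b_2) ≠ (0,0)) such that h(a_1 + b_1 t, a_2 + b_2 t) = 0 for all t ∈ F_q, then the linear polynomial L(X,Y) = b_2(X - a_1) - b_1(Y - a_2) divides h in F_q[X,Y]. -/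
/-!
Restricted to the line, `h` becomes a univariate polynomial of degree at most `deg h < q`
vanishing at all `q` points of `F_q`, so the restriction is zero. Choosing an affine coordinate
`ℓ` along the line, the substitution `X ↦ a₁ + b₁ ℓ, Y ↦ a₂ + b₂ ℓ` therefore kills `h`, and it
changes every polynomial only by a multiple of `L`, because it moves `X` and `Y` by multiples of `L`.
-/

open MvPolynomial

theorem MvPolynomial.dvd_sub_aeval_of_dvd_X_sub {σ R : Type*} [CommRing R]
    {g : MvPolynomial σ R} {v : σ → MvPolynomial σ R} (hv : ∀ i, g ∣ X i - v i)
    (p : MvPolynomial σ R) : g ∣ p - aeval v p := by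
  set π := Ideal.Quotient.mkₐ R (Ideal.span {g})
  suffices π p = π (aeval v p) by
    rwa [Ideal.Quotient.mkₐ_eq_mk, Ideal.Quotient.eq, Ideal.mem_span_singleton] at this
  have hπv : (fun i ↦ π (v i)) = fun i ↦ π (X i) := by
    funext i
    rw [Ideal.Quotient.mkₐ_eq_mk, Ideal.Quotient.eq, Ideal.mem_span_singleton]
    exact dvd_sub_comm.1 (hv i)
  rw [comp_aeval_apply, hπv, ← comp_aeval_apply, aeval_X_left_apply]

theorem MvPolynomial.dvd_of_aeval_eq_zero {σ R : Type*} [CommRing R] {g ℓ : MvPolynomial σ R}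
    {w : σ → Polynomial R} (hw : ∀ i, g ∣ X i - Polynomial.aeval ℓ (w i))
    {p : MvPolynomial σ R} (hp : aeval w p = 0) : g ∣ p := by
  have := dvd_sub_aeval_of_dvd_X_sub hw p
  rwa [← comp_aeval_apply, hp, map_zero, sub_zero] at this

theorem MvPolynomial.natDegree_aeval_le {σ R : Type*} [CommSemiring R] {w : σ → Polynomial R}
    {n : ℕ} (hw : ∀ i, (w i).natDegree ≤ n) (p : MvPolynomial σ R) :
    (aeval w p).natDegree ≤ n * p.totalDegree := by
  rw [aeval_def, eval₂_eq]
  refine Polynomial.natDegree_sum_le_of_forall_le _ _ fun d hd ↦ ?_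
  refine Polynomial.natDegree_mul_le.trans ?_
  rw [Polynomial.algebraMap_apply, Polynomial.natDegree_C, zero_add]
  refine (Polynomial.natDegree_prod_le _ _).trans ?_
  calc ∑ i ∈ d.support, (w i ^ d i).natDegree
      ≤ ∑ i ∈ d.support, d i * n :=
        Finset.sum_le_sum fun i _ ↦ Polynomial.natDegree_pow_le.trans (by gcongr; exact hw i)
    _ ≤ n * p.totalDegree := by
        rw [← Finset.sum_mul, mul_comm]
        gcongr
        exact le_totalDegree hd

theorem MvPolynomial.aeval_eq_zero_of_forall_eval_eq_zero {σ F : Type*} [Field F] [Fintype F]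
    {w : σ → Polynomial F} (hw : ∀ i, (w i).natDegree ≤ 1) {p : MvPolynomial σ F}
    (hp : p.totalDegree < Fintype.card F) (hvanish : ∀ t, eval (fun i ↦ (w i).eval t) p = 0) :
    aeval w p = 0 := by
  refine Polynomial.eq_zero_of_natDegree_lt_card_of_eval_eq_zero _ Function.injective_id
    (fun t ↦ ?_) ((natDegree_aeval_le hw p).trans_lt (by rwa [one_mul]))
  rw [← Polynomial.coe_aeval_eq_eval, comp_aeval_apply]
  exact hvanish t

theorem stmt_11_general (F : Type*) [Field F] [Fintype F] (h : MvPolynomial (Fin 2) F)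
    (hdeg : h.totalDegree < Fintype.card F)
    (a₁ a₂ b₁ b₂ : F) (hb : ¬ (b₁ = 0 ∧ b₂ = 0))
    (hvanish : ∀ t : F, eval ![a₁ + b₁ * t, a₂ + b₂ * t] h = 0) :
    (C b₂ * (X 0 - C a₁) - C b₁ * (X 1 - C a₂)) ∣ h := by
  set line : Fin 2 → Polynomial F :=
    ![Polynomial.C b₁ * Polynomial.X + Polynomial.C a₁,
      Polynomial.C b₂ * Polynomial.X + Polynomial.C a₂]
  have hline : aeval line h = 0 := by
    refine aeval_eq_zero_of_forall_eval_eq_zero (fun i ↦ ?_) hdeg fun t ↦ ?_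
    · fin_cases i <;> exact Polynomial.natDegree_linear_le
    · convert hvanish t using 3
      funext i
      fin_cases i <;> simp [line, add_comm]
  -- `ℓ = c₁ (X - a₁) + c₂ (Y - a₂)` takes the value `t` at the point with parameter `t`.
  obtain ⟨c₁, c₂, hc⟩ : ∃ c₁ c₂ : F, c₁ * b₁ + c₂ * b₂ = 1 := by
    by_cases hb₁ : b₁ = 0
    · exact ⟨0, b₂⁻¹, by simp [inv_mul_cancel₀ (hb ⟨hb₁, ·⟩)]⟩
    · exact ⟨b₁⁻¹, 0, by simp [hb₁]⟩
  have hc' : C c₁ * C b₁ + C c₂ * C b₂ = (1 : MvPolynomial (Fin 2) F) := by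
    rw [← C_mul, ← C_mul, ← C_add, hc, C_1]
  refine dvd_of_aeval_eq_zero (ℓ := C c₁ * (X 0 - C a₁) + C c₂ * (X 1 - C a₂)) (fun i ↦ ?_) hline
  fin_cases i <;> simp only [line, Fin.zero_eta, Fin.mk_one, Matrix.cons_val_zero,
    Matrix.cons_val_one, Matrix.cons_val_fin_one, map_add, map_mul, Polynomial.aeval_C,
    Polynomial.aeval_X, algebraMap_eq]
  · exact Dvd.intro (C c₂) (by linear_combination (X 0 - C a₁) * hc')
  · exact Dvd.intro (-C c₁) (by linear_combination (X 1 - C a₂) * hc')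

/-- if a nonzero bivariate polynomial `h` of total degree `< q`
vanishes on the whole line `t ↦ (a₁ + b₁ t, a₂ + b₂ t)` (with `(b₁,b₂) ≠ (0,0)`),
then the linear polynomial `b₂(X - a₁) - b₁(Y - a₂)` divides `h`. -/
theorem stmt_11 (F : Type*) [Field F] [Fintype F] (h : MvPolynomial (Fin 2) F)
    (hne : h ≠ 0) (hdeg : h.totalDegree < Fintype.card F)
    (a₁ a₂ b₁ b₂ : F) (hb : ¬ (b₁ = 0 ∧ b₂ = 0))
    (hvanish : ∀ t : F, eval ![a₁ + b₁ * t, a₂ + b₂ * t] h = 0) :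
    (C b₂ * (X 0 - C a₁) - C b₁ * (X 1 - C a₂)) ∣ h :=
  stmt_11_general F h hdeg a₁ a₂ b₁ b₂ hb hvanish
end
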